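/- Let A be a commutative ring, 𝒮 a multiplicative system of finitely generated ideals of A satisfying the generalized anti-Archimedean condition, A an 𝒮-Noetherian ring, and P a prime ideal of A[[x]] with x ∈ P. If the image P' of P under the evaluation map A[[x]] → A (sending x to 0) is 𝒮-finite, then P is 𝒮-finite. -/

import Mathlib

theorem prime_with_X_S_finite {A : Type*} [CommRing A] (𝒮 : Set (Ideal A))
    (htop : (⊤ : Ideal A) ∈ 𝒮)
    (hmul : ∀ H₁ ∈ 𝒮, ∀ H₂ ∈ 𝒮, H₁ * H₂ ∈ 𝒮)
    (hfg : ∀ H ∈ 𝒮, H.FG)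
    (hantiarch : ∀ H ∈ 𝒮, ∃ I ∈ 𝒮, ∀ n : ℕ, 1 ≤ n → I ≤ H ^ n)
    (hNoeth : ∀ I : Ideal A, ∃ H ∈ 𝒮, ∃ F : Ideal A, F ≤ I ∧ F.FG ∧ H * I ≤ F)
    (P : Ideal (PowerSeries A)) (hP : P.IsPrime) (hX : PowerSeries.X ∈ P)
    (hP' : ∃ H ∈ 𝒮, ∃ F : Ideal A,
      F ≤ Ideal.map ((PowerSeries.constantCoeff : PowerSeries A →+* A)) P ∧ F.FG ∧
        H * Ideal.map ((PowerSeries.constantCoeff : PowerSeries A →+* A)) P ≤ F) :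
    ∃ H ∈ 𝒮, ∃ F : Ideal (PowerSeries A),
      F ≤ P ∧ F.FG ∧ (Ideal.map ((PowerSeries.C : A →+* PowerSeries A)) H) * P ≤ F := by
  obtain ⟨H, hH, F, hFP', hFfg, hHF⟩ := hP'
  have hsurj : Function.Surjective ((PowerSeries.constantCoeff : PowerSeries A →+* A)) := fun a =>
    ⟨(PowerSeries.C : A →+* PowerSeries A) a, PowerSeries.constantCoeff_C a⟩
  refine ⟨H, hH, Ideal.span {PowerSeries.X} ⊔ Ideal.map ((PowerSeries.C : A →+* PowerSeries A)) F, ?_, ?_, ?_⟩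
  · refine sup_le ?_ ?_
    · rw [Ideal.span_le]; simpa using hX
    · rw [Ideal.map_le_iff_le_comap]
      intro a ha
      have ha' := hFP' ha
      rw [Ideal.mem_map_iff_of_surjective _ hsurj] at ha'
      obtain ⟨f, hf, hfa⟩ := ha'
      obtain ⟨g, hg⟩ : (PowerSeries.X : PowerSeries A) ∣ f - (PowerSeries.C : A →+* PowerSeries A) a := by
        rw [PowerSeries.X_dvd_iff]; simp [hfa]
      have heq : (PowerSeries.C : A →+* PowerSeries A) a = f - PowerSeries.X * g := by rw [← hg]; ring
      simp only [Ideal.mem_comap]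
      rw [heq]
      exact Ideal.sub_mem _ hf (Ideal.mul_mem_right _ _ hX)
  · exact Submodule.FG.sup (Submodule.fg_span_singleton _) (Ideal.FG.map hFfg _)
  · have key : ∀ h ∈ H, ∀ f ∈ P,
        (PowerSeries.C : A →+* PowerSeries A) h * f ∈
          Ideal.span {PowerSeries.X} ⊔ Ideal.map ((PowerSeries.C : A →+* PowerSeries A)) F := by
      intro h hh f hf
      set a := (PowerSeries.constantCoeff : PowerSeries A →+* A) f with ha
      have haP' : a ∈ Ideal.map ((PowerSeries.constantCoeff : PowerSeries A →+* A)) P :=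
        Ideal.mem_map_of_mem _ hf
      have hFa : h * a ∈ F := hHF (Ideal.mul_mem_mul hh haP')
      obtain ⟨g, hg⟩ : (PowerSeries.X : PowerSeries A) ∣
          (PowerSeries.C : A →+* PowerSeries A) h * f - (PowerSeries.C : A →+* PowerSeries A) (h * a) := by
        rw [PowerSeries.X_dvd_iff]; simp [ha]
      have heq : (PowerSeries.C : A →+* PowerSeries A) h * f = PowerSeries.X * g + (PowerSeries.C : A →+* PowerSeries A) (h * a) := by
        rw [← hg]; ring
      rw [heq]
      exact Ideal.add_mem _
        (Ideal.mem_sup_left (Ideal.mul_mem_right _ _ (Ideal.subset_span rfl)))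
        (Ideal.mem_sup_right (Ideal.mem_map_of_mem _ hFa))
    rw [Ideal.mul_le]
    intro r hr s hs
    induction hr using Submodule.span_induction with
    | mem y hy =>
        obtain ⟨h, hh, rfl⟩ := hy
        exact key h hh s hs
    | zero => simp only [zero_mul]; exact Ideal.zero_mem _
    | add y z _ _ hy hz => rw [add_mul]; exact Ideal.add_mem _ hy hz
    | smul c y _ hy =>
        rw [smul_eq_mul, mul_assoc]
        exact Ideal.mul_mem_left _ _ hy
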